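/- arXiv:2311.01216 — 4 statements merged into one kernel-verified Lean document; each statement's English description precedes it below -/
import Mathlib

section
/- Let g : ℝⁿ → ℝ be differentiable with ∇g L-Lipschitz for some 0 ≤ L < 1, set D = Id − ∇g, h(x) = (1/2)‖x‖² − g(x), and define φ : ℝⁿ → ℝ by φ(x) = sup_{y ∈ ℝⁿ} ( ⟨x, y⟩ − h(y) ) − (1/2)‖x‖². Then for every y ∈ ℝⁿ, φ(D(y)) = g(y) − (1/2)‖y − D(y)‖² = g(y) − (1/2)‖∇g(y)‖². -/
/-! For `L ≤ 1` the descent lemma `g z ≤ g y + ⟪∇g y, z - y⟫ + (L/2)‖z - y‖²` says that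
`h = ½‖·‖² - g` lies above its tangent plane `h y + ⟪D y, z - y⟫` at every `y`. Hence `y` maximizes
`z ↦ ⟪D y, z⟫ - h z`, the supremum defining `φ (D y)` is attained at `z = y`, and the formula
follows by expanding `‖D y‖² = ‖y - ∇g y‖²`. -/

open RealInnerProductSpace

variable {E : Type*} [NormedAddCommGroup E] [InnerProductSpace ℝ E] [CompleteSpace E]
  {g : E → ℝ} {g' : E → E} {L : ℝ}

lemma le_add_inner_add_of_lipschitz_gradient (hg : ∀ x, HasGradientAt g (g' x) x)
    (hlip : ∀ u v, ‖g' u - g' v‖ ≤ L * ‖u - v‖) (y z : E) :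
    g z ≤ g y + ⟪g' y, z - y⟫ + L / 2 * ‖z - y‖ ^ 2 := by
  set v := z - y
  -- `F 1 ≤ F 0` is the claim.
  let F : ℝ → ℝ := fun t ↦ g (y + t • v) - t * ⟪g' y, v⟫ - L / 2 * t ^ 2 * ‖v‖ ^ 2
  have hF : ∀ t, HasDerivAt F (⟪g' (y + t • v) - g' y, v⟫ - L * t * ‖v‖ ^ 2) t := by
    intro t
    have hline : HasDerivAt (fun s : ℝ ↦ y + s • v) v t := by
      simpa using ((hasDerivAt_id t).smul_const v).const_add y
    have hgline : HasDerivAt (fun s : ℝ ↦ g (y + s • v)) ⟪g' (y + t • v), v⟫ t :=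
      (hg _).hasFDerivAt.comp_hasDerivAt t hline
    have hquad : HasDerivAt (fun s : ℝ ↦ L / 2 * s ^ 2 * ‖v‖ ^ 2) (L * t * ‖v‖ ^ 2) t :=
      (((hasDerivAt_pow 2 t).const_mul (L / 2)).mul_const (‖v‖ ^ 2)).congr_deriv (by ring)
    refine ((hgline.sub (hasDerivAt_mul_const ⟪g' y, v⟫)).sub hquad).congr_deriv ?_
    rw [inner_sub_left]
  have hF_nonpos : ∀ t ∈ interior (Set.Icc (0 : ℝ) 1),
      ⟪g' (y + t • v) - g' y, v⟫ - L * t * ‖v‖ ^ 2 ≤ 0 := by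
    intro t ht
    rw [interior_Icc] at ht
    have := calc ⟪g' (y + t • v) - g' y, v⟫
        _ ≤ ‖g' (y + t • v) - g' y‖ * ‖v‖ := real_inner_le_norm _ _
        _ ≤ L * ‖(y + t • v) - y‖ * ‖v‖ := by gcongr; exact hlip _ _
        _ = L * t * ‖v‖ ^ 2 := by
          simp only [add_sub_cancel_left, norm_smul, Real.norm_eq_abs, abs_of_pos ht.1]; ring
    linarith
  have hanti : AntitoneOn F (Set.Icc 0 1) :=
    antitoneOn_of_hasDerivWithinAt_nonpos (convex_Icc 0 1)
      (fun t _ ↦ (hF t).continuousAt.continuousWithinAt)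
      (fun t _ ↦ (hF t).hasDerivWithinAt) hF_nonpos
  have := hanti (by simp) (by simp) zero_le_one
  simp only [F, zero_smul, add_zero, zero_mul, sub_zero, one_smul, one_mul, ne_eq,
    OfNat.ofNat_ne_zero, not_false_eq_true, zero_pow, one_pow, v, add_sub_cancel] at this
  linarith

lemma inner_sub_half_norm_sq_add_le_of_lipschitz_gradient (hg : ∀ x, HasGradientAt g (g' x) x)
    (hlip : ∀ u v, ‖g' u - g' v‖ ≤ L * ‖u - v‖) (hL : L ≤ 1) (y z : E) :
    ⟪y - g' y, z⟫ - (1 / 2 * ‖z‖ ^ 2 - g z) ≤ ⟪y - g' y, y⟫ - (1 / 2 * ‖y‖ ^ 2 - g y) := by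
  have hdescent := le_add_inner_add_of_lipschitz_gradient hg hlip y z
  have hsq : ‖z‖ ^ 2 = ‖y‖ ^ 2 + 2 * ⟪y, z - y⟫ + ‖z - y‖ ^ 2 := by
    simpa using norm_add_sq_real y (z - y)
  have hinner : ⟪y - g' y, z⟫ = ⟪y - g' y, y⟫ + ⟪y, z - y⟫ - ⟪g' y, z - y⟫ := by
    rw [add_sub_assoc, ← inner_sub_left, ← inner_add_right, add_sub_cancel]
  nlinarith [sq_nonneg ‖z - y‖]

theorem phi_on_image_of_denoiser_general {n : ℕ}
    (g : EuclideanSpace ℝ (Fin n) → ℝ)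
    (g' : EuclideanSpace ℝ (Fin n) → EuclideanSpace ℝ (Fin n))
    (L : ℝ) (hL1 : L < 1)
    (hg : ∀ x, HasGradientAt g (g' x) x)
    (hlip : ∀ u v, ‖g' u - g' v‖ ≤ L * ‖u - v‖)
    (D : EuclideanSpace ℝ (Fin n) → EuclideanSpace ℝ (Fin n))
    (hD : ∀ x, D x = x - g' x)
    (h : EuclideanSpace ℝ (Fin n) → ℝ)
    (hh : ∀ x, h x = 1 / 2 * ‖x‖ ^ 2 - g x)
    (φ : EuclideanSpace ℝ (Fin n) → ℝ)
    (hφ : ∀ x, φ x = (⨆ y, (⟪x, y⟫ - h y)) - 1 / 2 * ‖x‖ ^ 2) :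
    ∀ y, φ (D y) = g y - 1 / 2 * ‖y - D y‖ ^ 2 ∧
         φ (D y) = g y - 1 / 2 * ‖g' y‖ ^ 2 := by
  intro y
  have hmax : ∀ z, ⟪D y, z⟫ - h z ≤ ⟪D y, y⟫ - h y := fun z ↦ by
    simpa only [hD, hh] using
      inner_sub_half_norm_sq_add_le_of_lipschitz_gradient hg hlip hL1.le y z
  have hsup : (⨆ z, (⟪D y, z⟫ - h z)) = ⟪D y, y⟫ - h y :=
    ciSup_eq_of_forall_le_of_forall_lt_exists_gt hmax fun _ hw ↦ ⟨y, hw⟩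
  have hφDy : φ (D y) = g y - 1 / 2 * ‖g' y‖ ^ 2 := by
    rw [hφ, hsup, hh, hD, inner_sub_left, real_inner_self_eq_norm_sq, norm_sub_sq_real,
      real_inner_comm]
    ring
  have hresidual : y - D y = g' y := by rw [hD, sub_sub_cancel]
  exact ⟨by rw [hresidual, hφDy], hφDy⟩

/-- with `D = Id − ∇g`, `h(x) = (1/2)‖x‖² − g(x)` and
`φ(x) = sup_y (⟪x,y⟫ − h(y)) − (1/2)‖x‖²`, for every `y`,
`φ(D(y)) = g(y) − (1/2)‖y − D(y)‖² = g(y) − (1/2)‖∇g(y)‖²`. -/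
theorem phi_on_image_of_denoiser {n : ℕ}
    (g : EuclideanSpace ℝ (Fin n) → ℝ)
    (g' : EuclideanSpace ℝ (Fin n) → EuclideanSpace ℝ (Fin n))
    (L : ℝ) (hL0 : 0 ≤ L) (hL1 : L < 1)
    (hg : ∀ x, HasGradientAt g (g' x) x)
    (hlip : ∀ u v, ‖g' u - g' v‖ ≤ L * ‖u - v‖)
    (D : EuclideanSpace ℝ (Fin n) → EuclideanSpace ℝ (Fin n))
    (hD : ∀ x, D x = x - g' x)
    (h : EuclideanSpace ℝ (Fin n) → ℝ)
    (hh : ∀ x, h x = 1 / 2 * ‖x‖ ^ 2 - g x)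
    (φ : EuclideanSpace ℝ (Fin n) → ℝ)
    (hφ : ∀ x, φ x = (⨆ y, (⟪x, y⟫ - h y)) - 1 / 2 * ‖x‖ ^ 2) :
    ∀ y, φ (D y) = g y - 1 / 2 * ‖y - D y‖ ^ 2 ∧
         φ (D y) = g y - 1 / 2 * ‖g' y‖ ^ 2 :=
  phi_on_image_of_denoiser_general g g' L hL1 hg hlip D hD h hh φ hφ
end

section
/- Sufficient decrease for proximal gradient descent: let f : ℝⁿ → ℝ be differentiable with ∇f L_f-Lipschitz, let φ : ℝⁿ → ℝ be M-weakly convex (M ∈ ℝ), let τ > 0, and set F = f + φ. Let (x_k) be a sequence in ℝⁿ such that for each k, x_{k+1} minimizes u ↦ φ(u) + (1/(2τ))‖u − (x_k − τ·∇f(x_k))‖² over ℝⁿ. Then for every k, F(x_k) ≥ F(x_{k+1}) + (1/τ − (M + L_f)/2)·‖x_k − x_{k+1}‖². In particular, if τ < 2/(M + L_f), the sequence (F(x_k)) is non-increasing. -/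
/-!
The prox objective `u ↦ φ u + ‖u - z‖² / (2τ)` is `(1/τ - M)`-strongly convex, so its minimiser
`x_{k+1}` beats `x_k` by `(1/τ - M)/2 · ‖x_k - x_{k+1}‖²`. With `z = x_k - τ∇f(x_k)` this produces
the linear term `-⟪∇f(x_k), x_{k+1} - x_k⟫`, which cancels against the one in the descent lemma
`f(x_{k+1}) ≤ f(x_k) + ⟪∇f(x_k), x_{k+1} - x_k⟫ + L_f/2 · ‖x_{k+1} - x_k‖²`.
-/

open RealInnerProductSpace Set Filter Topology

lemma sub_le_half_of_hasDerivAt_le_mul {g g' : ℝ → ℝ} {C : ℝ}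
    (hg : ∀ t ∈ Icc (0 : ℝ) 1, HasDerivAt g (g' t) t) (hg' : ∀ t ∈ Ioo (0 : ℝ) 1, g' t ≤ C * t) :
    g 1 - g 0 ≤ C / 2 := by
  have hderiv : ∀ t ∈ Icc (0 : ℝ) 1, HasDerivAt (fun s ↦ g s - C / 2 * s ^ 2) (g' t - C * t) t :=
    fun t ht ↦ (hg t ht).sub <|
      ((hasDerivAt_pow 2 t).const_mul (C / 2)).congr_deriv (by norm_num; ring)
  have hanti : AntitoneOn (fun s ↦ g s - C / 2 * s ^ 2) (Icc 0 1) := by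
    refine antitoneOn_of_hasDerivWithinAt_nonpos (convex_Icc 0 1)
      (fun t ht ↦ (hderiv t ht).continuousAt.continuousWithinAt)
      (fun t ht ↦ (hderiv t (interior_subset ht)).hasDerivWithinAt) fun t ht ↦ ?_
    rw [interior_Icc] at ht
    linarith [hg' t ht]
  have := hanti (left_mem_Icc.2 zero_le_one) (right_mem_Icc.2 zero_le_one) zero_le_one
  simp only at this
  linarith

variable {E : Type*} [NormedAddCommGroup E] [InnerProductSpace ℝ E]

lemma le_add_inner_add_sq_of_lipschitz_gradient [CompleteSpace E] {f : E → ℝ} {f' : E → E}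
    {L : ℝ} (hf : ∀ x, HasGradientAt f (f' x) x) (hlip : ∀ u v, ‖f' u - f' v‖ ≤ L * ‖u - v‖)
    (x y : E) : f y ≤ f x + ⟪f' x, y - x⟫ + L / 2 * ‖y - x‖ ^ 2 := by
  set d := y - x with hd
  have hline : ∀ t : ℝ, HasDerivAt (fun s : ℝ ↦ f (x + s • d) - s * ⟪f' x, d⟫)
      (⟪f' (x + t • d), d⟫ - ⟪f' x, d⟫) t := fun t ↦
    ((hf _).hasFDerivAt.comp_hasDerivAt t
      (by simpa using ((hasDerivAt_id t).smul_const d).const_add x)).sub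
      (by simpa using (hasDerivAt_id t).mul_const ⟪f' x, d⟫)
  have hbound : ∀ t ∈ Ioo (0 : ℝ) 1, ⟪f' (x + t • d), d⟫ - ⟪f' x, d⟫ ≤ (L * ‖d‖ ^ 2) * t := by
    intro t ht
    have hlip_t : ‖f' (x + t • d) - f' x‖ ≤ L * (t * ‖d‖) := by
      simpa [norm_smul, abs_of_pos ht.1] using hlip (x + t • d) x
    calc ⟪f' (x + t • d), d⟫ - ⟪f' x, d⟫ = ⟪f' (x + t • d) - f' x, d⟫ := (inner_sub_left ..).symm
      _ ≤ ‖f' (x + t • d) - f' x‖ * ‖d‖ := real_inner_le_norm _ _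
      _ ≤ L * (t * ‖d‖) * ‖d‖ := by gcongr
      _ = L * ‖d‖ ^ 2 * t := by ring
  have := sub_le_half_of_hasDerivAt_le_mul (fun t _ ↦ hline t) hbound
  simp only [zero_smul, add_zero, one_smul, zero_mul, sub_zero, one_mul, hd, add_sub_cancel] at this
  linarith

lemma StrongConvexOn.add_sq_norm_sub_le_of_isMinOn {s : Set E} {m : ℝ} {f : E → ℝ} {p u : E}
    (hf : StrongConvexOn s m f) (hp : IsMinOn f s p) (hps : p ∈ s) (hu : u ∈ s) :
    f p + m / 2 * ‖u - p‖ ^ 2 ≤ f u := by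
  -- compare `f p` with `f` at the point `t • u + (1 - t) • p` and let `t → 0`
  have hseg : ∀ t ∈ Ioo (0 : ℝ) 1, (1 - t) * (m / 2 * ‖u - p‖ ^ 2) ≤ f u - f p := by
    intro t ht
    have hmix := hf.2 hu hps ht.1.le (sub_nonneg.2 ht.2.le) (add_sub_cancel t 1)
    have hmin := isMinOn_iff.1 hp _
      (hf.1 hu hps ht.1.le (sub_nonneg.2 ht.2.le) (add_sub_cancel t 1))
    simp only [smul_eq_mul] at hmix
    have : t * ((1 - t) * (m / 2 * ‖u - p‖ ^ 2)) ≤ t * (f u - f p) := by linarith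
    exact le_of_mul_le_mul_left this ht.1
  have hlim : Tendsto (fun t : ℝ ↦ (1 - t) * (m / 2 * ‖u - p‖ ^ 2)) (𝓝[>] 0)
      (𝓝 (m / 2 * ‖u - p‖ ^ 2)) := by
    have : Continuous fun t : ℝ ↦ (1 - t) * (m / 2 * ‖u - p‖ ^ 2) := by fun_prop
    simpa using (this.tendsto 0).mono_left nhdsWithin_le_nhds
  have := le_of_tendsto hlim (eventually_of_mem (Ioo_mem_nhdsGT zero_lt_one) hseg)
  linarith

lemma strongConvexOn_add_sq_norm_sub {φ : E → ℝ} {M : ℝ}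
    (hφ : ConvexOn ℝ univ fun x ↦ φ x + M / 2 * ‖x‖ ^ 2) (c : ℝ) (z : E) :
    StrongConvexOn univ (c - M) fun u ↦ φ u + c / 2 * ‖u - z‖ ^ 2 := by
  rw [strongConvexOn_iff_convex]
  refine (hφ.add ((LinearMap.convexOn (c • innerₗ E (-z)) convex_univ).add_const
    (c / 2 * ‖z‖ ^ 2))).congr fun u _ ↦ ?_
  simp only [Pi.add_apply, LinearMap.smul_apply, innerₗ_apply_apply, smul_eq_mul, inner_neg_left,
    norm_sub_sq_real, real_inner_comm z u]
  ring

lemma prox_grad_step_decrease [CompleteSpace E] {f φ : E → ℝ} {f' : E → E} {M L τ : ℝ}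
    (hf : ∀ x, HasGradientAt f (f' x) x) (hlip : ∀ u v, ‖f' u - f' v‖ ≤ L * ‖u - v‖)
    (hφ : ConvexOn ℝ univ fun x ↦ φ x + M / 2 * ‖x‖ ^ 2) (hτ : τ ≠ 0) {x p : E}
    (hp : ∀ u, φ p + 1 / (2 * τ) * ‖p - (x - τ • f' x)‖ ^ 2 ≤
      φ u + 1 / (2 * τ) * ‖u - (x - τ • f' x)‖ ^ 2) :
    f p + φ p + (1 / τ - (M + L) / 2) * ‖x - p‖ ^ 2 ≤ f x + φ x := by
  have hmin : IsMinOn (fun u ↦ φ u + 1 / τ / 2 * ‖u - (x - τ • f' x)‖ ^ 2) univ p :=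
    isMinOn_univ_iff.2 fun u ↦ by simpa only [div_div, mul_comm τ 2] using hp u
  have hprox := (strongConvexOn_add_sq_norm_sub hφ (1 / τ) (x - τ • f' x))
    |>.add_sq_norm_sub_le_of_isMinOn hmin (mem_univ p) (mem_univ x)
  have hdesc := le_add_inner_add_sq_of_lipschitz_gradient hf hlip x p
  have hpz : p - (x - τ • f' x) = τ • f' x - (x - p) := by abel
  rw [sub_sub_cancel, hpz, norm_sub_sq_real, real_inner_smul_left] at hprox
  rw [norm_sub_rev p x, ← neg_sub x p, inner_neg_right] at hdesc
  linear_combination hprox + hdesc + ⟪f' x, x - p⟫ * (mul_one_div_cancel hτ)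

/-- Sufficient decrease for proximal gradient descent: for `f` differentiable
with `∇f` `L_f`-Lipschitz, `φ` `M`-weakly convex, `τ > 0`, `F = f + φ`, and `(x_k)` the PGD
iterates `x_{k+1} ∈ Prox_{τφ}(x_k − τ∇f(x_k))`, one has for every `k`
`F(x_k) ≥ F(x_{k+1}) + (1/τ − (M + L_f)/2)·‖x_k − x_{k+1}‖²`; in particular, if
`τ < 2/(M + L_f)` (stated as `τ·(M + L_f) < 2`), the sequence `(F(x_k))` is non-increasing. -/
theorem pgd_sufficient_decrease {n : ℕ}
    (f : EuclideanSpace ℝ (Fin n) → ℝ)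
    (f' : EuclideanSpace ℝ (Fin n) → EuclideanSpace ℝ (Fin n))
    (φ : EuclideanSpace ℝ (Fin n) → ℝ) (M L_f τ : ℝ)
    (hf : ∀ x, HasGradientAt f (f' x) x)
    (hlip : ∀ u v, ‖f' u - f' v‖ ≤ L_f * ‖u - v‖)
    (hφ : ConvexOn ℝ Set.univ (fun x => φ x + M / 2 * ‖x‖ ^ 2))
    (hτ : 0 < τ)
    (F : EuclideanSpace ℝ (Fin n) → ℝ) (hF : ∀ x, F x = f x + φ x)
    (x : ℕ → EuclideanSpace ℝ (Fin n))
    (hx : ∀ k, ∀ u,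
      φ (x (k + 1)) + 1 / (2 * τ) * ‖x (k + 1) - (x k - τ • f' (x k))‖ ^ 2 ≤
        φ u + 1 / (2 * τ) * ‖u - (x k - τ • f' (x k))‖ ^ 2) :
    (∀ k, F (x k) ≥ F (x (k + 1)) + (1 / τ - (M + L_f) / 2) * ‖x k - x (k + 1)‖ ^ 2) ∧
    (τ * (M + L_f) < 2 → ∀ k, F (x (k + 1)) ≤ F (x k)) := by
  have hdecrease : ∀ k,
      F (x k) ≥ F (x (k + 1)) + (1 / τ - (M + L_f) / 2) * ‖x k - x (k + 1)‖ ^ 2 := fun k ↦ by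
    rw [hF, hF]
    exact prox_grad_step_decrease hf hlip hφ hτ.ne' (hx k)
  refine ⟨hdecrease, fun hstep k ↦ ?_⟩
  have hcoef : 0 ≤ 1 / τ - (M + L_f) / 2 := by
    rw [sub_nonneg, le_div_iff₀ hτ]
    linarith
  linarith [hdecrease k, mul_nonneg hcoef (sq_nonneg ‖x k - x (k + 1)‖)]
end

section
/- Finite length and rate for αPGD: let f : ℝⁿ → ℝ be convex, differentiable with ∇f L_f-Lipschitz, and bounded below; let φ : ℝⁿ → ℝ be M-weakly convex with M ≥ 0 and bounded below; let α ∈ (0,1) and τ > 0 satisfy τ < min(1/(α·L_f), α/M); set F = f + φ with lower bound F*. Let (q_k), (x_k), (y_k) satisfy, for all k ≥ 0: q_{k+1} = (1−α)y_k + α·x_k; x_{k+1} a minimizer over ℝⁿ of u ↦ φ(u) + (1/(2τ))‖u − (x_k − τ·∇f(q_{k+1}))‖²; y_{k+1} = (1−α)y_k + α·x_{k+1}. Set δ = (α/(2τ))(1 − 1/α)² and γ = (1/α)(1/(2τ) − M(2−α)/2). Then γ − δ > 0, Σ_{k=1}^∞ ‖y_{k+1} − y_k‖² ≤ (F(y_1)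 + δ‖y_1 − y_0‖² − F*)/(γ − δ) < ∞, and for every K ≥ 1, min_{1 ≤ k ≤ K} ‖y_{k+1} − y_k‖² ≤ (1/K)·(F(y_1) + δ‖y_1 − y_0‖² − F*)/(γ − δ). -/
/-!
`E k = F (y (k + 1)) + δ * ‖y (k + 1) - y k‖ ^ 2` is a Lyapunov function for αPGD. Add the descent
lemma and the gradient inequality for `f` at `q (k + 2)`, weak convexity of `φ` along the average
`y (k + 2) = (1 - α) • y (k + 1) + α • x (k + 2)`, and `α` times the three-point inequality of the
proximal step (whose objective is `(1/τ - M)`-strongly convex). The gradient terms cancel, and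
`E` decreases by at least `(γ - δ) * ‖y (k + 2) - y (k + 1)‖ ^ 2` per step. Telescoping down to
`F ≥ Fstar` bounds the partial sums. That gives the series bound, and averaging gives the rate.
-/

open RealInnerProductSpace Set Filter Topology Finset

section InnerProductSpace

variable {H : Type*} [NormedAddCommGroup H] [InnerProductSpace ℝ H]

theorem StrongConvexOn.add_mul_norm_sub_sq {s : Set H} {m : ℝ} {g : H → ℝ}
    (hg : StrongConvexOn s m g) (c : ℝ) (z : H) :
    StrongConvexOn s (m + 2 * c) fun u => g u + c * ‖u - z‖ ^ 2 := by
  rw [strongConvexOn_iff_convex] at hg ⊢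
  have hlin : ConvexOn ℝ s (⇑((-(2 * c)) • innerₛₗ ℝ z) + fun _ => c * ‖z‖ ^ 2) :=
    (LinearMap.convexOn _ hg.1).add_const _
  refine (hg.add hlin).congr fun u _ => ?_
  simp only [Pi.add_apply, LinearMap.smul_apply, innerₛₗ_apply_apply, smul_eq_mul,
    norm_sub_sq_real, real_inner_comm z u]
  ring

theorem StrongConvexOn.add_le_of_isMinOn {s : Set H} {m : ℝ} {g : H → ℝ} {p u : H}
    (hg : StrongConvexOn s m g) (hp : IsMinOn g s p) (hps : p ∈ s) (hu : u ∈ s) :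
    g p + m / 2 * ‖u - p‖ ^ 2 ≤ g u := by
  have hsmall : ∀ t ∈ Ioo (0 : ℝ) 1,
      g p + m / 2 * ‖u - p‖ ^ 2 ≤ g u + t * (m / 2 * ‖u - p‖ ^ 2) := by
    rintro t ⟨ht0, ht1⟩
    have hcomb := hg.2 hps hu (sub_nonneg.2 ht1.le) ht0.le (sub_add_cancel 1 t)
    have hmin : g p ≤ g ((1 - t) • p + t • u) :=
      isMinOn_iff.1 hp _ (hg.1 hps hu (sub_nonneg.2 ht1.le) ht0.le (sub_add_cancel 1 t))
    simp only [smul_eq_mul, norm_sub_rev p u] at hcomb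
    refine le_of_mul_le_mul_left ?_ ht0
    linarith [hmin.trans hcomb]
  have hlim : Tendsto (fun t => g u + t * (m / 2 * ‖u - p‖ ^ 2)) (𝓝[>] 0) (𝓝 (g u)) := by
    have : Continuous fun t : ℝ => g u + t * (m / 2 * ‖u - p‖ ^ 2) := by fun_prop
    simpa using (this.tendsto 0).mono_left nhdsWithin_le_nhds
  exact ge_of_tendsto hlim (eventually_of_mem (Ioo_mem_nhdsGT one_pos) hsmall)

theorem proxGrad_three_point {φ : H → ℝ} {M τ : ℝ} {x G p : H}
    (hφ : StrongConvexOn univ (-M) φ) (hτ : τ ≠ 0)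
    (hp : IsMinOn (fun u => φ u + 1 / (2 * τ) * ‖u - (x - τ • G)‖ ^ 2) univ p) (u : H) :
    φ p + ⟪G, p - x⟫ + 1 / (2 * τ) * ‖p - x‖ ^ 2 + (1 / (2 * τ) - M / 2) * ‖u - p‖ ^ 2 ≤
      φ u + ⟪G, u - x⟫ + 1 / (2 * τ) * ‖u - x‖ ^ 2 := by
  have h := (hφ.add_mul_norm_sub_sq (1 / (2 * τ)) (x - τ • G)).add_le_of_isMinOn hp
    (mem_univ p) (mem_univ u)
  have hexpand : ∀ w, 1 / (2 * τ) * ‖w - (x - τ • G)‖ ^ 2 =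
      1 / (2 * τ) * ‖w - x‖ ^ 2 + ⟪G, w - x⟫ + τ / 2 * ‖G‖ ^ 2 := by
    intro w
    rw [show w - (x - τ • G) = (w - x) + τ • G by abel, norm_add_sq_real, real_inner_smul_right,
      norm_smul, mul_pow, Real.norm_eq_abs, sq_abs, real_inner_comm]
    field_simp
  rw [hexpand, hexpand] at h
  linarith

variable [CompleteSpace H]

theorem HasGradientAt.hasDerivAt_comp_add_smul {f : H → ℝ} {g a v : H} {t : ℝ}
    (hf : HasGradientAt f g (a + t • v)) :
    HasDerivAt (fun s : ℝ => f (a + s • v)) ⟪g, v⟫ t := by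
  have hline : HasDerivAt (fun s : ℝ => a + s • v) v t := by
    simpa using ((hasDerivAt_id t).smul_const v).const_add a
  simpa [InnerProductSpace.toDual_apply_apply, Function.comp_def] using
    hf.hasFDerivAt.comp_hasDerivAt t hline

theorem ConvexOn.add_inner_gradient_le {f : H → ℝ} {g a : H} (hconv : ConvexOn ℝ univ f)
    (hf : HasGradientAt f g a) (b : H) : f a + ⟪g, b - a⟫ ≤ f b := by
  have hline : ConvexOn ℝ univ fun t : ℝ => f (a + t • (b - a)) := by
    simpa [Function.comp_def, AffineMap.lineMap_apply_module', add_comm] using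
      hconv.comp_affineMap (AffineMap.lineMap a b)
  have hderiv := HasGradientAt.hasDerivAt_comp_add_smul (v := b - a) (t := 0) (by simpa using hf)
  have := hline.le_slope_of_hasDerivAt (mem_univ 0) (mem_univ 1) one_pos hderiv
  simp [slope_def_field] at this
  linarith

theorem le_add_inner_gradient_add_sq {f : H → ℝ} {f' : H → H} {L : ℝ}
    (hf : ∀ x, HasGradientAt f (f' x) x) (hlip : ∀ u v, ‖f' u - f' v‖ ≤ L * ‖u - v‖)
    (a b : H) : f b ≤ f a + ⟪f' a, b - a⟫ + L / 2 * ‖b - a‖ ^ 2 := by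
  set v := b - a
  set ψ : ℝ → ℝ := fun t => f (a + t • v) - t * ⟪f' a, v⟫ - t ^ 2 * (L / 2 * ‖v‖ ^ 2)
  have hψ : ∀ t, HasDerivAt ψ (⟪f' (a + t • v), v⟫ - ⟪f' a, v⟫ - t * (L * ‖v‖ ^ 2)) t := by
    intro t
    have h1 := (hf (a + t • v)).hasDerivAt_comp_add_smul
    have h2 := (hasDerivAt_id t).mul_const ⟪f' a, v⟫
    have h3 := (hasDerivAt_pow 2 t).mul_const (L / 2 * ‖v‖ ^ 2)
    exact ((h1.sub h2).sub h3).congr_deriv (by simp; ring)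
  obtain ⟨c, ⟨hc0, -⟩, hc⟩ := exists_hasDerivAt_eq_slope ψ _ one_pos
    (fun t _ => (hψ t).continuousAt.continuousWithinAt) (fun t _ => hψ t)
  have hmono : ⟪f' (a + c • v), v⟫ - ⟪f' a, v⟫ ≤ c * (L * ‖v‖ ^ 2) :=
    calc ⟪f' (a + c • v), v⟫ - ⟪f' a, v⟫ = ⟪f' (a + c • v) - f' a, v⟫ := (inner_sub_left ..).symm
      _ ≤ ‖f' (a + c • v) - f' a‖ * ‖v‖ := real_inner_le_norm _ _
      _ ≤ L * ‖c • v‖ * ‖v‖ := by gcongr; simpa using hlip (a + c • v) a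
      _ = c * (L * ‖v‖ ^ 2) := by rw [norm_smul, Real.norm_of_nonneg hc0.le]; ring
  have : ψ 1 ≤ ψ 0 := by
    have : (ψ 1 - ψ 0) / (1 - 0) ≤ 0 := by rw [← hc]; linarith
    simpa using this
  simp [ψ, v] at this
  linarith

theorem alphaPGD_descent_step {f φ : H → ℝ} {f' : H → H} {M L α τ : ℝ}
    (hf : ∀ x, HasGradientAt f (f' x) x) (hfconv : ConvexOn ℝ univ f)
    (hlip : ∀ u v, ‖f' u - f' v‖ ≤ L * ‖u - v‖) (hφ : StrongConvexOn univ (-M) φ)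
    (hα0 : 0 < α) (hα1 : α ≤ 1) (hτ : 0 < τ) (hτL : τ * α * L ≤ 1)
    {y₀ y₁ y₂ x₁ x₂ q : H} (hq : q = (1 - α) • y₁ + α • x₁) (hy₁ : y₁ = (1 - α) • y₀ + α • x₁)
    (hy₂ : y₂ = (1 - α) • y₁ + α • x₂)
    (hx₂ : IsMinOn (fun u => φ u + 1 / (2 * τ) * ‖u - (x₁ - τ • f' q)‖ ^ 2) univ x₂) :
    f y₂ + φ y₂ + 1 / α * (1 / (2 * τ) - M * (2 - α) / 2) * ‖y₂ - y₁‖ ^ 2 ≤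
      f y₁ + φ y₁ + α / (2 * τ) * (1 - 1 / α) ^ 2 * ‖y₁ - y₀‖ ^ 2 := by
  have hsmooth := le_add_inner_gradient_add_sq hf hlip q y₂
  have hconvq := hfconv.add_inner_gradient_le (hf q) y₁
  have hweak : φ y₂ ≤ (1 - α) * φ y₁ + α * φ x₂ + M / 2 * ((1 - α) * α) * ‖x₂ - y₁‖ ^ 2 := by
    have := hφ.2 (mem_univ y₁) (mem_univ x₂) (sub_nonneg.2 hα1) hα0.le (sub_add_cancel 1 α)
    rw [hy₂, norm_sub_rev]
    simp only [smul_eq_mul] at this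
    linarith
  have hprox := proxGrad_three_point hφ hτ.ne' hx₂ y₁
  rw [norm_sub_rev y₁ x₂] at hprox
  have norm_smul_sq : ∀ (c : ℝ) (v : H), ‖c • v‖ ^ 2 = c ^ 2 * ‖v‖ ^ 2 := fun c v => by
    rw [norm_smul, mul_pow, Real.norm_eq_abs, sq_abs]
  have hy₂q : ‖y₂ - q‖ ^ 2 = α ^ 2 * ‖x₂ - x₁‖ ^ 2 := by
    rw [← norm_smul_sq, hy₂, hq]; congr 2; module
  have hy₂y₁ : ‖y₂ - y₁‖ ^ 2 = α ^ 2 * ‖x₂ - y₁‖ ^ 2 := by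
    rw [← norm_smul_sq, hy₂]; congr 2; module
  have hy₁y₀ : ‖y₁ - y₀‖ ^ 2 = α ^ 2 * ‖x₁ - y₀‖ ^ 2 := by
    rw [← norm_smul_sq, hy₁]; congr 2; module
  have hy₁x₁ : ‖y₁ - x₁‖ ^ 2 = (α - 1) ^ 2 * ‖x₁ - y₀‖ ^ 2 := by
    rw [← norm_smul_sq, hy₁]; congr 2; module
  have hinner : ⟪f' q, y₂ - q⟫ - ⟪f' q, y₁ - q⟫ = α * (⟪f' q, x₂ - x₁⟫ - ⟪f' q, y₁ - x₁⟫) := by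
    rw [← inner_sub_right, ← inner_sub_right, ← real_inner_smul_right]; congr 1; rw [hy₂]; module
  have hLα : L / 2 * α ^ 2 ≤ α * (1 / (2 * τ)) :=
    calc L / 2 * α ^ 2 = α * (1 / (2 * τ)) * (τ * α * L) := by field_simp
      _ ≤ α * (1 / (2 * τ)) * 1 := by gcongr
      _ = α * (1 / (2 * τ)) := mul_one _
  rw [hy₂q] at hsmooth
  rw [hy₁x₁] at hprox
  rw [hy₂y₁, hy₁y₀]
  have hcoef₂ : 1 / α * (1 / (2 * τ) - M * (2 - α) / 2) * (α ^ 2 * ‖x₂ - y₁‖ ^ 2) =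
      α * (1 / (2 * τ) - M * (2 - α) / 2) * ‖x₂ - y₁‖ ^ 2 := by field_simp
  have hcoef₁ : α / (2 * τ) * (1 - 1 / α) ^ 2 * (α ^ 2 * ‖x₁ - y₀‖ ^ 2) =
      α * (1 / (2 * τ)) * ((α - 1) ^ 2 * ‖x₁ - y₀‖ ^ 2) := by field_simp
  rw [hcoef₂, hcoef₁]
  -- The gradient terms cancel by `hinner`, since `y₂ - y₁ = α • (x₂ - y₁)`.
  linarith [mul_le_mul_of_nonneg_left hprox hα0.le,
    mul_le_mul_of_nonneg_right hLα (sq_nonneg ‖x₂ - x₁‖)]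

end InnerProductSpace

theorem sum_range_le_div_of_add_mul_le {a d : ℕ → ℝ} {c m : ℝ} (hc : 0 < c)
    (hm : ∀ k, m ≤ a k) (hstep : ∀ k, a (k + 1) + c * d k ≤ a k) (K : ℕ) :
    ∑ k ∈ range K, d k ≤ (a 0 - m) / c := by
  rw [le_div_iff₀' hc, mul_sum]
  calc ∑ k ∈ range K, c * d k ≤ ∑ k ∈ range K, (a k - a (k + 1)) :=
        sum_le_sum fun k _ => by linarith [hstep k]
    _ = a 0 - a K := sum_range_sub' a K
    _ ≤ a 0 - m := by linarith [hm K]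

theorem exists_lt_le_div_of_sum_range_le {d : ℕ → ℝ} {B : ℝ} {K : ℕ} (hK : 0 < K)
    (h : ∑ k ∈ range K, d k ≤ B) : ∃ k < K, d k ≤ B / K := by
  have hconst : ∑ _k ∈ range K, B / K = B := by
    rw [sum_const, card_range, nsmul_eq_mul, mul_div_cancel₀ _ (by positivity)]
  obtain ⟨k, hk, hle⟩ := exists_le_of_sum_le (nonempty_range_iff.2 hK.ne') (h.trans hconst.ge)
  exact ⟨k, mem_range.1 hk, hle⟩

theorem alphaPGD_finite_length_and_rate_general {n : ℕ}
    (f : EuclideanSpace ℝ (Fin n) → ℝ)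
    (f' : EuclideanSpace ℝ (Fin n) → EuclideanSpace ℝ (Fin n))
    (φ : EuclideanSpace ℝ (Fin n) → ℝ) (M L_f α τ Fstar : ℝ)
    (hf : ∀ x, HasGradientAt f (f' x) x)
    (hfconv : ConvexOn ℝ Set.univ f)
    (hlip : ∀ u v, ‖f' u - f' v‖ ≤ L_f * ‖u - v‖)
    (hφ : ConvexOn ℝ Set.univ (fun x => φ x + M / 2 * ‖x‖ ^ 2))
    (hα : α ∈ Set.Ioo (0 : ℝ) 1) (hτ : 0 < τ)
    (hτL : τ * α * L_f < 1) (hτM : τ * M < α)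
    (F : EuclideanSpace ℝ (Fin n) → ℝ) (hF : ∀ x, F x = f x + φ x)
    (hFstar : ∀ x, Fstar ≤ F x)
    (q x y : ℕ → EuclideanSpace ℝ (Fin n))
    (hq : ∀ k, q (k + 1) = (1 - α) • y k + α • x k)
    (hx : ∀ k, ∀ u,
      φ (x (k + 1)) + 1 / (2 * τ) * ‖x (k + 1) - (x k - τ • f' (q (k + 1)))‖ ^ 2 ≤
        φ u + 1 / (2 * τ) * ‖u - (x k - τ • f' (q (k + 1)))‖ ^ 2)
    (hy : ∀ k, y (k + 1) = (1 - α) • y k + α • x (k + 1))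
    (δ γ : ℝ)
    (hδ : δ = α / (2 * τ) * (1 - 1 / α) ^ 2)
    (hγ : γ = 1 / α * (1 / (2 * τ) - M * (2 - α) / 2)) :
    γ - δ > 0 ∧
    Summable (fun k : ℕ => ‖y (k + 2) - y (k + 1)‖ ^ 2) ∧
    (∑' k : ℕ, ‖y (k + 2) - y (k + 1)‖ ^ 2) ≤
      (F (y 1) + δ * ‖y 1 - y 0‖ ^ 2 - Fstar) / (γ - δ) ∧
    (∀ K : ℕ, 1 ≤ K → ∃ k : ℕ, 1 ≤ k ∧ k ≤ K ∧
      ‖y (k + 1) - y k‖ ^ 2 ≤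
        (1 / (K : ℝ)) * ((F (y 1) + δ * ‖y 1 - y 0‖ ^ 2 - Fstar) / (γ - δ))) := by
  obtain ⟨hα0, hα1⟩ := hα
  have hgap : 0 < γ - δ := by
    have : γ - δ = (2 - α) * (α - τ * M) / (2 * τ * α) := by rw [hγ, hδ]; field_simp; ring
    rw [this]
    exact div_pos (mul_pos (by linarith) (by linarith)) (by positivity)
  have hφ' : StrongConvexOn univ (-M) φ := strongConvexOn_iff_convex.2 (by simpa [neg_div] using hφ)
  set energy : ℕ → ℝ := fun k => F (y (k + 1)) + δ * ‖y (k + 1) - y k‖ ^ 2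
  have hbelow : ∀ k, Fstar ≤ energy k := fun k => by
    have : 0 ≤ δ := by rw [hδ]; positivity
    linarith [hFstar (y (k + 1)), mul_nonneg this (sq_nonneg ‖y (k + 1) - y k‖)]
  have hdecrease : ∀ k, energy (k + 1) + (γ - δ) * ‖y (k + 2) - y (k + 1)‖ ^ 2 ≤ energy k := by
    intro k
    have := alphaPGD_descent_step hf hfconv hlip hφ' hα0 hα1.le hτ hτL.le (hq (k + 1)) (hy k)
      (hy (k + 1)) (isMinOn_univ_iff.2 (hx (k + 1)))
    simp only [energy, hF, hγ, hδ]
    linarith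
  have hsum := sum_range_le_div_of_add_mul_le hgap hbelow hdecrease
  refine ⟨hgap, summable_of_sum_range_le (fun _ => sq_nonneg _) hsum,
    Real.tsum_le_of_sum_range_le (fun _ => sq_nonneg _) hsum, fun K hK => ?_⟩
  obtain ⟨k, hk, hle⟩ := exists_lt_le_div_of_sum_range_le hK (hsum K)
  exact ⟨k + 1, by omega, hk, by rwa [one_div_mul_eq_div]⟩

/-- Finite length and rate for αPGD: with `f` convex, differentiable, `∇f`
`L_f`-Lipschitz, bounded below; `φ` `M`-weakly convex (`M ≥ 0`), bounded below;
`α ∈ (0,1)`, `τ > 0` with `τ < min(1/(αL_f), α/M)` (stated as `τ·α·L_f < 1` and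
`τ·M < α`); `F = f + φ` with lower bound `F*`; and αPGD iterates:
setting `δ = (α/(2τ))(1 − 1/α)²` and `γ = (1/α)(1/(2τ) − M(2−α)/2)`, one has `γ − δ > 0`,
`Σ_{k≥1} ‖y_{k+1} − y_k‖² ≤ (F(y_1) + δ‖y_1 − y_0‖² − F*)/(γ − δ) < ∞`, and for every
`K ≥ 1`, `min_{1 ≤ k ≤ K} ‖y_{k+1} − y_k‖² ≤ (1/K)·(F(y_1) + δ‖y_1 − y_0‖² − F*)/(γ − δ)`. -/
theorem alphaPGD_finite_length_and_rate {n : ℕ}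
    (f : EuclideanSpace ℝ (Fin n) → ℝ)
    (f' : EuclideanSpace ℝ (Fin n) → EuclideanSpace ℝ (Fin n))
    (φ : EuclideanSpace ℝ (Fin n) → ℝ) (M L_f α τ Fstar : ℝ)
    (hf : ∀ x, HasGradientAt f (f' x) x)
    (hfconv : ConvexOn ℝ Set.univ f)
    (hlip : ∀ u v, ‖f' u - f' v‖ ≤ L_f * ‖u - v‖)
    (hfbd : ∃ c, ∀ x, c ≤ f x)
    (hM : 0 ≤ M)
    (hφ : ConvexOn ℝ Set.univ (fun x => φ x + M / 2 * ‖x‖ ^ 2))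
    (hφbd : ∃ c, ∀ x, c ≤ φ x)
    (hα : α ∈ Set.Ioo (0 : ℝ) 1) (hτ : 0 < τ)
    (hτL : τ * α * L_f < 1) (hτM : τ * M < α)
    (F : EuclideanSpace ℝ (Fin n) → ℝ) (hF : ∀ x, F x = f x + φ x)
    (hFstar : ∀ x, Fstar ≤ F x)
    (q x y : ℕ → EuclideanSpace ℝ (Fin n))
    (hq : ∀ k, q (k + 1) = (1 - α) • y k + α • x k)
    (hx : ∀ k, ∀ u,
      φ (x (k + 1)) + 1 / (2 * τ) * ‖x (k + 1) - (x k - τ • f' (q (k + 1)))‖ ^ 2 ≤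
        φ u + 1 / (2 * τ) * ‖u - (x k - τ • f' (q (k + 1)))‖ ^ 2)
    (hy : ∀ k, y (k + 1) = (1 - α) • y k + α • x (k + 1))
    (δ γ : ℝ)
    (hδ : δ = α / (2 * τ) * (1 - 1 / α) ^ 2)
    (hγ : γ = 1 / α * (1 / (2 * τ) - M * (2 - α) / 2)) :
    γ - δ > 0 ∧
    Summable (fun k : ℕ => ‖y (k + 2) - y (k + 1)‖ ^ 2) ∧
    (∑' k : ℕ, ‖y (k + 2) - y (k + 1)‖ ^ 2) ≤
      (F (y 1) + δ * ‖y 1 - y 0‖ ^ 2 - Fstar) / (γ - δ) ∧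
    (∀ K : ℕ, 1 ≤ K → ∃ k : ℕ, 1 ≤ k ∧ k ≤ K ∧
      ‖y (k + 1) - y k‖ ^ 2 ≤
        (1 / (K : ℝ)) * ((F (y 1) + δ * ‖y 1 - y 0‖ ^ 2 - Fstar) / (γ - δ))) :=
  alphaPGD_finite_length_and_rate_general f f' φ M L_f α τ Fstar hf hfconv hlip hφ hα hτ hτL hτM F
    hF hFstar q x y hq hx hy δ γ hδ hγ
end

section
/- Residual rate for ProxPnP-DRS: let 0 ≤ L < 1, let φ : ℝⁿ → ℝ be differentiable, M-weakly convex with M = L/(L+1), bounded below, and with ∇φ (L/(1−L))-Lipschitz; let f : ℝⁿ → ℝ be bounded below, λ > 0, and β ∈ (0,1) satisfy β(2L³ − 3L² + 1) + (2L² + L − 1) < 0. Let the sequences (x_k), (y_k), (z_k) satisfy, for each k: y_{k+1} is the unique minimizer over ℝⁿ of u ↦ φ(u) + (1/2)‖u − x_k‖²; z_{k+1} is a minimizer over ℝⁿ of u ↦ λf(u) + (1/2)‖u − (2y_{k+1} − x_k)‖²; x_{k+1} = x_k + 2β(z_{k+1} − y_{k+1}). Set F^{DR}_k = F^{DR}(x_{k−1},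 y_k, z_k) with F^{DR}(x,y,z) = λf(z) + φ(y) + ⟨y−x, y−z⟩ + (1/2)‖y−z‖², δ = (1/2)(1−L)²( (1/β)(1 − L²/(1−L)²) − (1+M) ), and B = λ·inf f + inf φ. Then δ > 0, F^{DR}_k ≥ B for all k ≥ 1, F^{DR}_k − F^{DR}_{k+1} ≥ δ·‖x_k − x_{k−1}‖² = 4β²δ·‖z_k − y_k‖² for all k ≥ 1, and for every K ≥ 1, min_{1 ≤ k ≤ K} ‖z_k − y_k‖² ≤ (F^{DR}_1 − B)/(4β²δ·K); in particular ‖y_k − z_k‖ → 0. -/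
/-!
First-order optimality of the `φ`-prox gives `∇φ(y_{k+1}) = x_k - y_{k+1}`. Along one iteration
the envelope decreases: the `z`-update minimises it in `z`, weak convexity of `φ` at `y_{k+2}`
controls the change of `φ`, and the Lipschitz bound on `∇φ` reads
`‖(x_{k+1} - x_k) - (y_{k+2} - y_{k+1})‖ ≤ ℓ ‖y_{k+2} - y_{k+1}‖` with `ℓ = L/(1-L)`, which by
polarization turns the remaining terms into `δ ‖x_{k+1} - x_k‖²`. The descent lemma for `φ`
(with `ℓ ≤ 1`) bounds the envelope below by `λ f(z_k) + φ(z_k) ≥ B`, so the decrements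
`4β²δ‖z_k - y_k‖²` telescope to at most `F^{DR}_1 - B`.
-/

open RealInnerProductSpace

open Set AffineMap Filter Topology

section

variable {E : Type*} [NormedAddCommGroup E] [InnerProductSpace ℝ E]

def IsProxPoint (h : E → ℝ) (x p : E) : Prop :=
  ∀ u, h p + 1 / 2 * ‖p - x‖ ^ 2 ≤ h u + 1 / 2 * ‖u - x‖ ^ 2

variable [CompleteSpace E] {ψ : E → ℝ} {g u v : E}

theorem HasGradientAt.hasDerivAt_comp_lineMap {t : ℝ} (h : HasGradientAt ψ g (lineMap u v t)) :
    HasDerivAt (ψ ∘ lineMap u v) ⟪g, v - u⟫ t :=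
  h.hasFDerivAt.comp_hasDerivAt t hasDerivAt_lineMap

theorem HasGradientAt.add {χ : E → ℝ} {h : E} (hψ : HasGradientAt ψ g u)
    (hχ : HasGradientAt χ h u) :
    HasGradientAt (fun p => ψ p + χ p) (g + h) u := by
  rw [hasGradientAt_iff_hasFDerivAt, map_add]
  exact hψ.hasFDerivAt.add hχ.hasFDerivAt

theorem hasGradientAt_div_two_mul_norm_sub_sq (c : ℝ) (x u : E) :
    HasGradientAt (fun p => c / 2 * ‖p - x‖ ^ 2) (c • (u - x)) u := by
  rw [hasGradientAt_iff_hasFDerivAt]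
  refine (((hasFDerivAt_sub_const x).norm_sq).const_mul (c / 2)).congr_fderiv ?_
  ext w
  simp only [ContinuousLinearMap.comp_id, smul_apply, coe_innerSL_apply, nsmul_eq_mul,
    smul_eq_mul, InnerProductSpace.toDual_apply_apply, real_inner_smul_left]
  ring

theorem IsProxPoint.gradient_eq {x : E} (hp : IsProxPoint ψ x u) (hg : HasGradientAt ψ g u) :
    g = x - u := by
  have hmin : IsLocalMin (fun p => ψ p + 1 / 2 * ‖p - x‖ ^ 2) u := Eventually.of_forall hp
  have hq : HasGradientAt (fun p => 1 / 2 * ‖p - x‖ ^ 2) (u - x) u := by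
    simpa using hasGradientAt_div_two_mul_norm_sub_sq 1 x u
  have h := hmin.hasFDerivAt_eq_zero (hg.add hq).hasFDerivAt
  rw [← map_zero (InnerProductSpace.toDual ℝ E)] at h
  rw [← sub_eq_zero, ← (InnerProductSpace.toDual ℝ E).injective h]
  abel

theorem ConvexOn.inner_gradient_le_sub (hψ : ConvexOn ℝ univ ψ) (hg : HasGradientAt ψ g u)
    (v : E) : ⟪g, v - u⟫ ≤ ψ v - ψ u := by
  have hline := (hψ.comp_affineMap (lineMap u v)).le_slope_of_hasDerivAt (mem_univ 0)
    (mem_univ 1) one_pos (HasGradientAt.hasDerivAt_comp_lineMap (t := 0) (by simpa using hg))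
  simpa [slope_def_field] using hline

theorem add_inner_gradient_sub_le_of_convexOn_add_sq {M : ℝ}
    (hψ : ConvexOn ℝ univ (fun p => ψ p + M / 2 * ‖p‖ ^ 2)) (hg : HasGradientAt ψ g u)
    (v : E) : ψ u + ⟪g, v - u⟫ - M / 2 * ‖v - u‖ ^ 2 ≤ ψ v := by
  have hq : HasGradientAt (fun p => M / 2 * ‖p‖ ^ 2) (M • u) u := by
    simpa using hasGradientAt_div_two_mul_norm_sub_sq M 0 u
  have h := hψ.inner_gradient_le_sub (hg.add hq) v
  simp only [inner_add_left, real_inner_smul_left, inner_sub_right, real_inner_self_eq_norm_sq]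
    at h ⊢
  rw [norm_sub_sq_real, real_inner_comm u v]
  linarith

theorem le_add_inner_add_of_lipschitz_gradient_s17 {ψ' : E → E} {C : ℝ}
    (hd : ∀ p, HasGradientAt ψ (ψ' p) p) (hlip : ∀ p q, ‖ψ' p - ψ' q‖ ≤ C * ‖p - q‖) (u v : E) :
    ψ v ≤ ψ u + ⟪ψ' u, v - u⟫ + C / 2 * ‖v - u‖ ^ 2 := by
  set w := v - u
  let k : ℝ → ℝ := fun t => (ψ ∘ lineMap u v) t - t * ⟪ψ' u, w⟫ - C / 2 * ‖w‖ ^ 2 * t ^ 2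
  have hk : ∀ t, HasDerivAt k (⟪ψ' (lineMap u v t), w⟫ - ⟪ψ' u, w⟫ - C * ‖w‖ ^ 2 * t) t := by
    intro t
    refine ((((hd _).hasDerivAt_comp_lineMap).sub ((hasDerivAt_id t).mul_const _)).sub
      ((hasDerivAt_pow 2 t).const_mul (C / 2 * ‖w‖ ^ 2))).congr_deriv ?_
    push_cast
    ring
  have hk' : ∀ t ∈ interior (Ici (0 : ℝ)),
      ⟪ψ' (lineMap u v t), w⟫ - ⟪ψ' u, w⟫ - C * ‖w‖ ^ 2 * t ≤ 0 := by
    intro t ht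
    rw [interior_Ici, Set.mem_Ioi] at ht
    have hdist : ‖lineMap u v t - u‖ = t * ‖w‖ := by
      rw [lineMap_apply_module', add_sub_cancel_right, norm_smul, Real.norm_of_nonneg ht.le]
    suffices ⟪ψ' (lineMap u v t), w⟫ - ⟪ψ' u, w⟫ ≤ C * ‖w‖ ^ 2 * t by linarith
    calc ⟪ψ' (lineMap u v t), w⟫ - ⟪ψ' u, w⟫ = ⟪ψ' (lineMap u v t) - ψ' u, w⟫ :=
          (inner_sub_left ..).symm
      _ ≤ ‖ψ' (lineMap u v t) - ψ' u‖ * ‖w‖ := real_inner_le_norm ..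
      _ ≤ C * (t * ‖w‖) * ‖w‖ := by
          rw [← hdist]; exact mul_le_mul_of_nonneg_right (hlip _ _) (norm_nonneg w)
      _ = C * ‖w‖ ^ 2 * t := by ring
  have hanti := antitoneOn_of_hasDerivWithinAt_nonpos (convex_Ici 0)
    (HasDerivAt.continuousOn fun t _ => hk t) (fun t _ => (hk t).hasDerivWithinAt) hk'
    (mem_Ici.2 le_rfl) (mem_Ici.2 zero_le_one) zero_le_one
  simp only [k, Function.comp_apply, lineMap_apply_one, lineMap_apply_zero] at hanti
  linarith

end

section

variable {E : Type*} [NormedAddCommGroup E] [InnerProductSpace ℝ E]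

noncomputable def drEnvelope (lam : ℝ) (f φ : E → ℝ) (x y z : E) : ℝ :=
  lam * f z + φ y + ⟪y - x, y - z⟫ + 1 / 2 * ‖y - z‖ ^ 2

variable {lam : ℝ} {f φ : E → ℝ}

theorem drEnvelope_eq (x y z : E) :
    drEnvelope lam f φ x y z =
      lam * f z + 1 / 2 * ‖z - (2 • y - x)‖ ^ 2 + φ y - 1 / 2 * ‖x - y‖ ^ 2 := by
  have hsplit : z - (2 • y - x) = (x - y) - (y - z) := by rw [two_nsmul]; abel
  rw [drEnvelope, hsplit, norm_sub_sq_real (x - y), ← neg_sub x y, inner_neg_left]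
  ring

theorem drEnvelope_le_of_isProxPoint {x y z : E}
    (hz : IsProxPoint (fun u => lam * f u) (2 • y - x) z) (u : E) :
    drEnvelope lam f φ x y z ≤ drEnvelope lam f φ x y u := by
  rw [drEnvelope_eq, drEnvelope_eq]
  linarith [hz u]

theorem le_inner_sub_of_norm_sub_le {d w : E} {β ℓ M : ℝ} (hβ : 0 < β) (hℓ : 0 ≤ ℓ)
    (hgap : 1 + M ≤ 1 / β * (1 - ℓ ^ 2)) (h : ‖w - d‖ ≤ ℓ * ‖d‖) :
    (1 / β * (1 - ℓ ^ 2) - (1 + M)) / (2 * (1 + ℓ) ^ 2) * ‖w‖ ^ 2 ≤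
      (⟪d, w⟫ - ‖w‖ ^ 2 / 2) / β - (1 + M) / 2 * ‖d‖ ^ 2 := by
  have hw : ‖w‖ ≤ (1 + ℓ) * ‖d‖ := by linarith [norm_le_norm_sub_add w d]
  have hw2 : ‖w‖ ^ 2 ≤ (1 + ℓ) ^ 2 * ‖d‖ ^ 2 := by
    rw [← mul_pow]; exact pow_le_pow_left₀ (norm_nonneg w) hw 2
  have hwd2 : ‖w - d‖ ^ 2 ≤ ℓ ^ 2 * ‖d‖ ^ 2 := by
    rw [← mul_pow]; exact pow_le_pow_left₀ (norm_nonneg _) h 2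
  have hpolar : ⟪d, w⟫ - ‖w‖ ^ 2 / 2 = (‖d‖ ^ 2 - ‖w - d‖ ^ 2) / 2 := by
    rw [norm_sub_sq_real, real_inner_comm]; ring
  calc (1 / β * (1 - ℓ ^ 2) - (1 + M)) / (2 * (1 + ℓ) ^ 2) * ‖w‖ ^ 2
        ≤ (1 / β * (1 - ℓ ^ 2) - (1 + M)) / (2 * (1 + ℓ) ^ 2) * ((1 + ℓ) ^ 2 * ‖d‖ ^ 2) :=
        mul_le_mul_of_nonneg_left hw2 (div_nonneg (sub_nonneg.2 hgap) (by positivity))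
    _ = (1 / β * ((1 - ℓ ^ 2) * ‖d‖ ^ 2)) / 2 - (1 + M) / 2 * ‖d‖ ^ 2 := by
        field_simp
    _ ≤ (1 / β * (‖d‖ ^ 2 - ‖w - d‖ ^ 2)) / 2 - (1 + M) / 2 * ‖d‖ ^ 2 := by
        gcongr; linarith
    _ = (⟪d, w⟫ - ‖w‖ ^ 2 / 2) / β - (1 + M) / 2 * ‖d‖ ^ 2 := by
        rw [hpolar]; ring

theorem add_le_drEnvelope [CompleteSpace E] {φ' : E → E} {ℓ : ℝ} {x y : E}
    (hd : ∀ p, HasGradientAt φ (φ' p) p) (hlip : ∀ p q, ‖φ' p - φ' q‖ ≤ ℓ * ‖p - q‖)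
    (hℓ : ℓ ≤ 1) (hg : φ' y = x - y) (z : E) :
    lam * f z + φ z ≤ drEnvelope lam f φ x y z := by
  have hdesc := le_add_inner_add_of_lipschitz_gradient_s17 hd hlip y z
  have hinner : ⟪y - x, y - z⟫ = ⟪x - y, z - y⟫ := by
    rw [← neg_sub x y, ← neg_sub z y, inner_neg_neg]
  rw [hg] at hdesc
  rw [drEnvelope, hinner, norm_sub_rev y z]
  nlinarith [sq_nonneg ‖z - y‖]

theorem drEnvelope_add_le_drEnvelope [CompleteSpace E] {β ℓ M : ℝ} {x₀ y₁ z₁ x₁ y₂ z₂ : E}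
    (hφ : ConvexOn ℝ univ (fun p => φ p + M / 2 * ‖p‖ ^ 2))
    (hg₂ : HasGradientAt φ (x₁ - y₂) y₂)
    (hlip : ‖(x₁ - y₂) - (x₀ - y₁)‖ ≤ ℓ * ‖y₂ - y₁‖)
    (hx₁ : x₁ = x₀ + (2 * β) • (z₁ - y₁))
    (hz₂ : IsProxPoint (fun u => lam * f u) (2 • y₂ - x₁) z₂)
    (hβ : 0 < β) (hℓ : 0 ≤ ℓ) (hgap : 1 + M ≤ 1 / β * (1 - ℓ ^ 2)) :
    drEnvelope lam f φ x₁ y₂ z₂ +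
        (1 / β * (1 - ℓ ^ 2) - (1 + M)) / (2 * (1 + ℓ) ^ 2) * ‖x₁ - x₀‖ ^ 2 ≤
      drEnvelope lam f φ x₀ y₁ z₁ := by
  have hz := drEnvelope_le_of_isProxPoint (φ := φ) hz₂ z₁
  have hwc := add_inner_gradient_sub_le_of_convexOn_add_sq hφ hg₂ y₁
  have hcore := le_inner_sub_of_norm_sub_le (d := y₂ - y₁) (w := x₁ - x₀) hβ hℓ hgap
    (by convert hlip using 2; abel)
  have hz₁ : z₁ = y₁ + (2 * β)⁻¹ • (x₁ - x₀) := by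
    rw [hx₁, add_sub_cancel_left, smul_smul, inv_mul_cancel₀ (by positivity), one_smul]
    abel
  subst hz₁
  -- with `z₁` eliminated, the claim is `hz + hwc + hcore` up to a bilinear identity
  simp only [drEnvelope, ← real_inner_self_eq_norm_sq] at hz hwc hcore ⊢
  simp only [inner_add_left, inner_add_right, inner_sub_left, inner_sub_right,
    real_inner_smul_left, real_inner_smul_right, real_inner_comm x₀ y₁, real_inner_comm x₀ x₁,
    real_inner_comm x₀ y₂, real_inner_comm y₁ x₁, real_inner_comm y₁ y₂, real_inner_comm x₁ y₂,
    real_inner_comm y₂ z₂]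
    at hz hwc hcore ⊢
  linear_combination hz + hwc + hcore

end

theorem one_add_lt_of_stepsize {L β : ℝ} (hL0 : 0 ≤ L) (hL1 : L < 1) (hβ : 0 < β)
    (hβL : β * (2 * L ^ 3 - 3 * L ^ 2 + 1) + (2 * L ^ 2 + L - 1) < 0) :
    1 + L / (L + 1) < 1 / β * (1 - (L / (1 - L)) ^ 2) := by
  have h1L : 0 < 1 - L := sub_pos.2 hL1
  rw [← sub_pos]
  have hid : 1 / β * (1 - (L / (1 - L)) ^ 2) - (1 + L / (L + 1)) =
      -(β * (2 * L ^ 3 - 3 * L ^ 2 + 1) + (2 * L ^ 2 + L - 1)) / (β * (1 - L) ^ 2 * (L + 1)) := by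
    field_simp
    ring
  rw [hid]
  exact div_pos (neg_pos.2 hβL) (by positivity)

theorem div_one_sub_le_one_of_stepsize {L β : ℝ} (hL0 : 0 ≤ L) (hL1 : L < 1) (hβ : 0 < β)
    (hβL : β * (2 * L ^ 3 - 3 * L ^ 2 + 1) + (2 * L ^ 2 + L - 1) < 0) :
    L / (1 - L) ≤ 1 := by
  have hcubic : 0 ≤ β * ((1 - L) ^ 2 * (2 * L + 1)) := by positivity
  rw [div_le_one (sub_pos.2 hL1)]
  nlinarith

theorem mul_iInf_add_iInf_le {ι : Type*} {f g : ι → ℝ} {c : ℝ} (hc : 0 ≤ c)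
    (hf : BddBelow (range f)) (hg : BddBelow (range g)) (i : ι) :
    c * (⨅ j, f j) + ⨅ j, g j ≤ c * f i + g i :=
  add_le_add (mul_le_mul_of_nonneg_left (ciInf_le hf i) hc) (ciInf_le hg i)

theorem sum_range_le_sub_of_descent {F r : ℕ → ℝ} {B : ℝ} (hdesc : ∀ j, F (j + 1) + r j ≤ F j)
    (hB : ∀ j, B ≤ F j) (K : ℕ) : ∑ j ∈ Finset.range K, r j ≤ F 0 - B := by
  calc ∑ j ∈ Finset.range K, r j ≤ ∑ j ∈ Finset.range K, (F j - F (j + 1)) :=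
        Finset.sum_le_sum fun j _ => by linarith [hdesc j]
    _ = F 0 - F K := Finset.sum_range_sub' F K
    _ ≤ F 0 - B := by linarith [hB K]

theorem exists_lt_le_div_of_sum_range_le_s17 {r : ℕ → ℝ} {S : ℝ} {K : ℕ} (hK : 0 < K)
    (h : ∑ j ∈ Finset.range K, r j ≤ S) : ∃ j < K, r j ≤ S / K := by
  have hK' : (0 : ℝ) < K := Nat.cast_pos.2 hK
  obtain ⟨j, hj, hle⟩ := Finset.exists_le_of_sum_le (Finset.nonempty_range_iff.2 hK.ne')
    (g := fun _ => S / K) (by simpa [Finset.sum_const, nsmul_eq_mul, mul_div_cancel₀ _ hK'.ne'])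
  exact ⟨j, Finset.mem_range.1 hj, hle⟩

theorem tendsto_zero_of_tendsto_mul_sq {a : ℕ → ℝ} {c : ℝ} (hc : c ≠ 0) (ha : ∀ j, 0 ≤ a j)
    (h : Tendsto (fun j => c * a j ^ 2) atTop (𝓝 0)) : Tendsto a atTop (𝓝 0) := by
  have := (h.const_mul c⁻¹).sqrt
  simpa [inv_mul_cancel_left₀ hc, Real.sqrt_sq (ha _)] using this

theorem proxPnP_DRS_residual_rate_general {n : ℕ}
    (f : EuclideanSpace ℝ (Fin n) → ℝ)
    (φ : EuclideanSpace ℝ (Fin n) → ℝ)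
    (φ' : EuclideanSpace ℝ (Fin n) → EuclideanSpace ℝ (Fin n))
    (L M lam β : ℝ) (hL0 : 0 ≤ L) (hL1 : L < 1) (hM : M = L / (L + 1))
    (hφdiff : ∀ x, HasGradientAt φ (φ' x) x)
    (hφwc : ConvexOn ℝ Set.univ (fun x => φ x + M / 2 * ‖x‖ ^ 2))
    (hφbd : ∃ c, ∀ x, c ≤ φ x)
    (hφlip : ∀ u v, ‖φ' u - φ' v‖ ≤ L / (1 - L) * ‖u - v‖)
    (hfbd : ∃ c, ∀ x, c ≤ f x)
    (hlam : 0 < lam) (hβ : β ∈ Set.Ioo (0 : ℝ) 1)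
    (hβL : β * (2 * L ^ 3 - 3 * L ^ 2 + 1) + (2 * L ^ 2 + L - 1) < 0)
    (x y z : ℕ → EuclideanSpace ℝ (Fin n))
    (hy : ∀ k, ∀ u,
      φ (y (k + 1)) + 1 / 2 * ‖y (k + 1) - x k‖ ^ 2 ≤
        φ u + 1 / 2 * ‖u - x k‖ ^ 2)
    (hz : ∀ k, ∀ u,
      lam * f (z (k + 1)) + 1 / 2 * ‖z (k + 1) - (2 • y (k + 1) - x k)‖ ^ 2 ≤
        lam * f u + 1 / 2 * ‖u - (2 • y (k + 1) - x k)‖ ^ 2)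
    (hxs : ∀ k, x (k + 1) = x k + (2 * β) • (z (k + 1) - y (k + 1)))
    (FDR : ℕ → ℝ)
    (hFDR : ∀ k, FDR k =
      lam * f (z k) + φ (y k) + ⟪y k - x (k - 1), y k - z k⟫ + 1 / 2 * ‖y k - z k‖ ^ 2)
    (δ B : ℝ)
    (hδ : δ = 1 / 2 * (1 - L) ^ 2 * (1 / β * (1 - L ^ 2 / (1 - L) ^ 2) - (1 + M)))
    (hB : B = lam * (⨅ u, f u) + ⨅ u, φ u) :
    0 < δ ∧
    (∀ k : ℕ, 1 ≤ k → B ≤ FDR k) ∧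
    (∀ k : ℕ, 1 ≤ k →
      FDR k - FDR (k + 1) ≥ δ * ‖x k - x (k - 1)‖ ^ 2 ∧
      δ * ‖x k - x (k - 1)‖ ^ 2 = 4 * β ^ 2 * δ * ‖z k - y k‖ ^ 2) ∧
    (∀ K : ℕ, 1 ≤ K → ∃ k : ℕ, 1 ≤ k ∧ k ≤ K ∧
      ‖z k - y k‖ ^ 2 ≤ (FDR 1 - B) / (4 * β ^ 2 * δ * K)) ∧
    Filter.Tendsto (fun k => ‖y k - z k‖) Filter.atTop (nhds 0) := by
  obtain ⟨hβ0, -⟩ := hβ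
  set ℓ := L / (1 - L) with hℓ
  have hℓ0 : 0 ≤ ℓ := div_nonneg hL0 (sub_pos.2 hL1).le
  have hgap : 1 + M < 1 / β * (1 - ℓ ^ 2) := hM ▸ one_add_lt_of_stepsize hL0 hL1 hβ0 hβL
  have hℓ1 : ℓ ≤ 1 := div_one_sub_le_one_of_stepsize hL0 hL1 hβ0 hβL
  have hδ' : δ = (1 / β * (1 - ℓ ^ 2) - (1 + M)) / (2 * (1 + ℓ) ^ 2) := by
    have h1L : 1 - L ≠ 0 := (sub_pos.2 hL1).ne'
    rw [hδ, hℓ, div_pow]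
    field_simp
    ring
  have hδpos : 0 < δ := hδ' ▸ div_pos (sub_pos.2 hgap) (by positivity)
  have hgrad : ∀ j, φ' (y (j + 1)) = x j - y (j + 1) := fun j =>
    IsProxPoint.gradient_eq (hy j) (hφdiff _)
  have hF : ∀ j, FDR (j + 1) = drEnvelope lam f φ (x j) (y (j + 1)) (z (j + 1)) :=
    fun j => hFDR (j + 1)
  have hlow : ∀ j, B ≤ FDR (j + 1) := fun j => hB ▸ hF j ▸
    (mul_iInf_add_iInf_le hlam.le (hfbd.imp fun _ => forall_mem_range.2)
      (hφbd.imp fun _ => forall_mem_range.2) _).trans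
    (add_le_drEnvelope hφdiff hφlip hℓ1 (hgrad j) _)
  have hstep : ∀ j, FDR (j + 1 + 1) + δ * ‖x (j + 1) - x j‖ ^ 2 ≤ FDR (j + 1) := by
    intro j
    rw [hF, hF, hδ']
    refine drEnvelope_add_le_drEnvelope hφwc (hgrad (j + 1) ▸ hφdiff _) ?_ (hxs j) (hz (j + 1))
      hβ0 hℓ0 hgap.le
    simpa only [hgrad] using hφlip (y (j + 2)) (y (j + 1))
  have hres : ∀ j, ‖x (j + 1) - x j‖ ^ 2 = 4 * β ^ 2 * ‖z (j + 1) - y (j + 1)‖ ^ 2 := by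
    intro j
    rw [hxs j, add_sub_cancel_left, norm_smul, Real.norm_of_nonneg (by positivity)]
    ring
  have hsum := sum_range_le_sub_of_descent (F := fun j => FDR (j + 1))
    (r := fun j => 4 * β ^ 2 * δ * ‖z (j + 1) - y (j + 1)‖ ^ 2)
    (fun j => by linarith [hres j ▸ hstep j]) hlow
  refine ⟨hδpos, fun k hk => ?_, fun k hk => ?_, fun K hK => ?_, ?_⟩
  · obtain ⟨j, rfl⟩ := Nat.exists_eq_add_of_le' hk
    exact hlow j
  · obtain ⟨j, rfl⟩ := Nat.exists_eq_add_of_le' hk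
    rw [Nat.add_sub_cancel]
    exact ⟨by linarith [hstep j], by rw [hres]; ring⟩
  · obtain ⟨j, hjK, hj⟩ := exists_lt_le_div_of_sum_range_le_s17 hK (hsum K)
    refine ⟨j + 1, by omega, hjK, ?_⟩
    rw [le_div_iff₀ (by positivity)]
    rw [le_div_iff₀ (by exact_mod_cast hK)] at hj
    linarith
  · have hlim := (summable_of_sum_range_le (fun j => by positivity) hsum).tendsto_atTop_zero
    have := tendsto_zero_of_tendsto_mul_sq (by positivity) (fun j => norm_nonneg _) hlim
    simpa only [norm_sub_rev] using
      (tendsto_add_atTop_iff_nat (f := fun k => ‖z k - y k‖) 1).1 this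

/-- Residual rate for ProxPnP-DRS: with `0 ≤ L < 1`, `φ` differentiable,
`M = L/(L+1)`-weakly convex, bounded below, `∇φ` `(L/(1−L))`-Lipschitz; `f` bounded below;
`λ > 0`; `β ∈ (0,1)` with `β(2L³−3L²+1) + (2L²+L−1) < 0`; DRS iterates as in the
ProxPnP-DRS algorithm; `F^{DR}_k = F^{DR}(x_{k−1}, y_k, z_k)`,
`δ = (1/2)(1−L)²((1/β)(1 − L²/(1−L)²) − (1+M))`, `B = λ·inf f + inf φ`:
then `δ > 0`, `F^{DR}_k ≥ B` for `k ≥ 1`, for `k ≥ 1`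
`F^{DR}_k − F^{DR}_{k+1} ≥ δ‖x_k − x_{k−1}‖²` with
`δ‖x_k − x_{k−1}‖² = 4β²δ‖z_k − y_k‖²`, and for every `K ≥ 1`,
`min_{1 ≤ k ≤ K} ‖z_k − y_k‖² ≤ (F^{DR}_1 − B)/(4β²δK)`; in particular
`‖y_k − z_k‖ → 0`. -/
theorem proxPnP_DRS_residual_rate {n : ℕ}
    (f : EuclideanSpace ℝ (Fin n) → ℝ)
    (φ : EuclideanSpace ℝ (Fin n) → ℝ)
    (φ' : EuclideanSpace ℝ (Fin n) → EuclideanSpace ℝ (Fin n))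
    (L M lam β : ℝ) (hL0 : 0 ≤ L) (hL1 : L < 1) (hM : M = L / (L + 1))
    (hφdiff : ∀ x, HasGradientAt φ (φ' x) x)
    (hφwc : ConvexOn ℝ Set.univ (fun x => φ x + M / 2 * ‖x‖ ^ 2))
    (hφbd : ∃ c, ∀ x, c ≤ φ x)
    (hφlip : ∀ u v, ‖φ' u - φ' v‖ ≤ L / (1 - L) * ‖u - v‖)
    (hfbd : ∃ c, ∀ x, c ≤ f x)
    (hlam : 0 < lam) (hβ : β ∈ Set.Ioo (0 : ℝ) 1)
    (hβL : β * (2 * L ^ 3 - 3 * L ^ 2 + 1) + (2 * L ^ 2 + L - 1) < 0)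
    (x y z : ℕ → EuclideanSpace ℝ (Fin n))
    (hy : ∀ k, ∀ u,
      φ (y (k + 1)) + 1 / 2 * ‖y (k + 1) - x k‖ ^ 2 ≤
        φ u + 1 / 2 * ‖u - x k‖ ^ 2)
    (hyuniq : ∀ k, ∀ u,
      (∀ w, φ u + 1 / 2 * ‖u - x k‖ ^ 2 ≤ φ w + 1 / 2 * ‖w - x k‖ ^ 2) → u = y (k + 1))
    (hz : ∀ k, ∀ u,
      lam * f (z (k + 1)) + 1 / 2 * ‖z (k + 1) - (2 • y (k + 1) - x k)‖ ^ 2 ≤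
        lam * f u + 1 / 2 * ‖u - (2 • y (k + 1) - x k)‖ ^ 2)
    (hxs : ∀ k, x (k + 1) = x k + (2 * β) • (z (k + 1) - y (k + 1)))
    (FDR : ℕ → ℝ)
    (hFDR : ∀ k, FDR k =
      lam * f (z k) + φ (y k) + ⟪y k - x (k - 1), y k - z k⟫ + 1 / 2 * ‖y k - z k‖ ^ 2)
    (δ B : ℝ)
    (hδ : δ = 1 / 2 * (1 - L) ^ 2 * (1 / β * (1 - L ^ 2 / (1 - L) ^ 2) - (1 + M)))
    (hB : B = lam * (⨅ u, f u) + ⨅ u, φ u) :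
    0 < δ ∧
    (∀ k : ℕ, 1 ≤ k → B ≤ FDR k) ∧
    (∀ k : ℕ, 1 ≤ k →
      FDR k - FDR (k + 1) ≥ δ * ‖x k - x (k - 1)‖ ^ 2 ∧
      δ * ‖x k - x (k - 1)‖ ^ 2 = 4 * β ^ 2 * δ * ‖z k - y k‖ ^ 2) ∧
    (∀ K : ℕ, 1 ≤ K → ∃ k : ℕ, 1 ≤ k ∧ k ≤ K ∧
      ‖z k - y k‖ ^ 2 ≤ (FDR 1 - B) / (4 * β ^ 2 * δ * K)) ∧
    Filter.Tendsto (fun k => ‖y k - z k‖) Filter.atTop (nhds 0) :=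
  proxPnP_DRS_residual_rate_general f φ φ' L M lam β hL0 hL1 hM hφdiff hφwc hφbd hφlip hfbd hlam hβ
    hβL x y z hy hz hxs FDR hFDR δ B hδ hB
end
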